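/- arXiv:2102.03748 — 3 statements merged into one kernel-verified Lean document; each statement's English description precedes it below -/
import Mathlib

section
/- Let p, p̂ ∈ (0,1) with p̂ < p. Then kl(p̂ ‖ p) ≥ (p - p̂)² / (2p), where kl(q ‖ q') = q·log(q/q') + (1-q)·log((1-q)/(1-q')) is the binary KL divergence. -/
/-!
Writing `kl(q ‖ p) = p · φ(q / p) + (1 - p) · φ((1 - q) / (1 - p))` with `φ x = x log x + 1 - x`
(`InformationTheory.klFun`, which is nonnegative), it suffices to bound the first term. For
`0 < x ≤ 1` one has `log x ≥ sinh (log x) = (x - x⁻¹) / 2`, which rearranges to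
`φ x ≥ (1 - x)² / 2`; at `x = q / p` this is the claim.
-/

open Real InformationTheory

noncomputable def binKL (q q' : ℝ) : ℝ :=
  q * Real.log (q / q') + (1 - q) * Real.log ((1 - q) / (1 - q'))

lemma sub_inv_div_two_le_log {x : ℝ} (hx0 : 0 < x) (hx1 : x ≤ 1) : (x - x⁻¹) / 2 ≤ log x :=
  sinh_log hx0 ▸ sinh_le_self_iff.2 (log_nonpos hx0.le hx1)

lemma one_sub_sq_div_two_le_klFun {x : ℝ} (hx0 : 0 < x) (hx1 : x ≤ 1) :
    (1 - x) ^ 2 / 2 ≤ klFun x := by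
  have hlog := mul_le_mul_of_nonneg_left (sub_inv_div_two_le_log hx0 hx1) hx0.le
  have hxinv : x * x⁻¹ = 1 := mul_inv_cancel₀ hx0.ne'
  rw [klFun_apply]
  nlinarith

lemma binKL_eq_klFun {q q' : ℝ} (h0 : q' ≠ 0) (h1 : q' ≠ 1) :
    binKL q q' = q' * klFun (q / q') + (1 - q') * klFun ((1 - q) / (1 - q')) := by
  have h1' : 1 - q' ≠ 0 := sub_ne_zero.2 h1.symm
  simp only [binKL, klFun_apply]
  field_simp
  ring

theorem refined_pinsker (pHat p : ℝ) (hpHat : pHat ∈ Set.Ioo (0:ℝ) 1) (hp : p ∈ Set.Ioo (0:ℝ) 1)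
    (hlt : pHat < p) : binKL pHat p ≥ (p - pHat) ^ 2 / (2 * p) := by
  obtain ⟨hq0, hq1⟩ := hpHat
  obtain ⟨hp0, hp1⟩ := hp
  have hfirst := one_sub_sq_div_two_le_klFun (div_pos hq0 hp0) ((div_le_one hp0).2 hlt.le)
  have hsecond : 0 ≤ klFun ((1 - pHat) / (1 - p)) :=
    klFun_nonneg (div_nonneg (by linarith) (by linarith))
  calc (p - pHat) ^ 2 / (2 * p) = p * ((1 - pHat / p) ^ 2 / 2) := by field_simp
    _ ≤ p * klFun (pHat / p) := by gcongr
    _ ≤ binKL pHat p := by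
      rw [binKL_eq_klFun hp0.ne' hp1.ne]
      exact le_add_of_nonneg_right (mul_nonneg (by linarith) hsecond)
end

section
/- Let e, ê ≥ 0 and ε > 0 satisfy e - ê ≤ √(2·e·ε). Then e ≤ (√(ê + ε/2) + √(ε/2))². -/
theorem quadratic_bound_step (e eHat ε : ℝ) (he : 0 ≤ e) (heHat : 0 ≤ eHat) (hε : 0 < ε)
    (h : e - eHat ≤ Real.sqrt (2 * e * ε)) :
    e ≤ (Real.sqrt (eHat + ε / 2) + Real.sqrt (ε / 2)) ^ 2 := by
  set A := Real.sqrt (eHat + ε/2) with hAdef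
  set B := Real.sqrt (ε/2) with hBdef
  have hB : 0 ≤ B := Real.sqrt_nonneg _
  have hA : 0 ≤ A := Real.sqrt_nonneg _
  have hB2 : B^2 = ε/2 := Real.sq_sqrt (by linarith)
  have hA2 : A^2 = eHat + ε/2 := Real.sq_sqrt (by linarith)
  have he2 : (Real.sqrt e)^2 = e := Real.sq_sqrt he
  have hs : Real.sqrt (2*e*ε) = 2 * Real.sqrt e * B := by
    rw [show 2*e*ε = e * (ε/2) * 4 by ring, Real.sqrt_mul (by positivity),
      Real.sqrt_mul he, show (4:ℝ) = 2^2 by norm_num, Real.sqrt_sq (by norm_num)]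
    ring
  rw [hs] at h
  have key : (Real.sqrt e - B)^2 ≤ A^2 := by nlinarith [Real.sqrt_nonneg e]
  have h2 : Real.sqrt e ≤ A + B := by nlinarith [Real.sqrt_nonneg e]
  nlinarith [Real.sqrt_nonneg e]
end

section
/- Let e, ê ≥ 0 and ε > 0 satisfy e - ê ≤ √(2·e·ε). Then for every λ ∈ (0,2), e ≤ ê/(1 - λ/2) + ε/(λ(1 - λ/2)). -/
theorem lambda_bound_step (e eHat ε : ℝ) (he : 0 ≤ e) (heHat : 0 ≤ eHat) (hε : 0 < ε)
    (h : e - eHat ≤ Real.sqrt (2 * e * ε)) :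
    ∀ lam ∈ Set.Ioo (0:ℝ) 2, e ≤ eHat / (1 - lam / 2) + ε / (lam * (1 - lam / 2)) := by
  rintro lam ⟨hl0, hl2⟩
  set s := Real.sqrt (2 * e * ε) with hs
  have hs0 : 0 ≤ s := Real.sqrt_nonneg _
  have hs2 : s ^ 2 = 2 * e * ε := by
    rw [hs, sq]
    exact Real.mul_self_sqrt (by positivity)
  have hmid : 1 - lam / 2 > 0 := by linarith
  have hsle : s ≤ lam * e / 2 + ε / lam := by
    have h1 : s ^ 2 ≤ (lam * e / 2 + ε / lam) ^ 2 := by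
      rw [hs2]
      have hsq : 0 ≤ (lam * e / 2 - ε / lam) ^ 2 := sq_nonneg _
      have : (lam * e / 2 + ε / lam) ^ 2 - 2 * e * ε = (lam * e / 2 - ε / lam) ^ 2 := by
        field_simp; ring
      linarith
    have h2 : 0 ≤ lam * e / 2 + ε / lam := by positivity
    nlinarith
  have key : e * (1 - lam / 2) ≤ eHat + ε / lam := by nlinarith
  rw [div_add_div _ _ (ne_of_gt hmid) (by positivity), le_div_iff₀ (by positivity)]
  have hε' : ε / lam * lam = ε := by field_simp
  nlinarith [mul_le_mul_of_nonneg_right key (by positivity : (0:ℝ) ≤ lam * (1 - lam / 2))]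
end
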